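/- arXiv:1412.8042 — 4 statements merged into one kernel-verified Lean document; each statement's English description precedes it below -/
import Mathlib

section
/- Let G be a finite abelian p-group of exponent pⁿ and F a finite field of characteristic not dividing |G|. The idempotents Ĝ together with e_H = Ĥ − Ĥ♯, for H ranging over co-cyclic subgroups of G, are pairwise orthogonal and their sum equals 1 in FG. -/
/-!
Evaluate at the characters `χ : G →* Kˣ` with values in an algebraic closure `K` of `F`. Since
`|G|` is invertible in `F`, Fourier inversion shows that these evaluations separate the elements
of `F G`, and `χ(Ĥ)` is `1` if `H ≤ ker χ` and `0` otherwise. For a co-cyclic `H` the subgroups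
containing `H` correspond to those of the cyclic `p`-group `G ⧸ H` and so form a chain; hence
`H♯` lies in every subgroup strictly containing `H`, and `χ(e_H) = 1` exactly when `ker χ = H`.
The kernel of a character is `⊤` or co-cyclic, so at every `χ` exactly one of `Ĝ` and the `e_H`
takes the value `1` and all the others vanish.
-/

open scoped Classical

/-- `hat F H` is the element `Ĥ = (1/|H|) ∑_{h ∈ H} h` of the group algebra `F G`. -/
noncomputable def hat (F : Type) [Field F] {G : Type} [Group G] [Fintype G]
    (H : Subgroup G) : MonoidAlgebra F G :=
  (Nat.card H : F)⁻¹ • ∑ h ∈ (H : Set G).toFinset, MonoidAlgebra.single h (1 : F)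

theorem IsCyclic.le_of_card_dvd {Q : Type*} [CommGroup Q] [Finite Q] [IsCyclic Q]
    {A B : Subgroup Q} (h : Nat.card A ∣ Nat.card B) : A ≤ B := by
  have hB : B = (powMonoidHom (Nat.card B) : Q →* Q).ker := by
    refine Subgroup.eq_of_le_of_card_ge (fun x hx => ?_) ?_
    · exact orderOf_dvd_iff_pow_eq_one.mp (Subgroup.orderOf_dvd_natCard B hx)
    · rw [IsCyclic.card_powMonoidHom_ker, Nat.gcd_eq_right (Subgroup.card_subgroup_dvd_card B)]
  rw [hB]
  exact fun x hx => orderOf_dvd_iff_pow_eq_one.mp ((Subgroup.orderOf_dvd_natCard A hx).trans h)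

theorem IsPGroup.le_total_of_isCyclic {p : ℕ} [Fact p.Prime] {Q : Type*} [CommGroup Q]
    [Finite Q] [IsCyclic Q] (hQ : IsPGroup p Q) (A B : Subgroup Q) : A ≤ B ∨ B ≤ A := by
  obtain ⟨a, hA⟩ := IsPGroup.iff_card.mp (hQ.to_subgroup A)
  obtain ⟨b, hB⟩ := IsPGroup.iff_card.mp (hQ.to_subgroup B)
  rcases le_total a b with h | h
  · exact Or.inl (IsCyclic.le_of_card_dvd (by rw [hA, hB]; exact pow_dvd_pow p h))
  · exact Or.inr (IsCyclic.le_of_card_dvd (by rw [hA, hB]; exact pow_dvd_pow p h))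

section CoCyclic

variable {G : Type*} [CommGroup G] [Finite G] {p : ℕ} [Fact p.Prime]

theorem IsPGroup.le_total_of_isCyclic_quotient (hG : IsPGroup p G) {H X Y : Subgroup G}
    [IsCyclic (G ⧸ H)] (hX : H ≤ X) (hY : H ≤ Y) : X ≤ Y ∨ Y ≤ X := by
  let e := QuotientGroup.comapMk'OrderIso H
  rcases (hG.to_quotient H).le_total_of_isCyclic (e.symm ⟨X, hX⟩) (e.symm ⟨Y, hY⟩) with h | h
  · exact Or.inl (e.symm.le_iff_le.mp h)
  · exact Or.inr (e.symm.le_iff_le.mp h)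

theorem Subgroup.le_of_lt_of_relIndex_eq_prime (hG : IsPGroup p G) {H K X : Subgroup G}
    [IsCyclic (G ⧸ H)] (hHK : H ≤ K) (hrel : H.relIndex K = p) (hHX : H < X) : K ≤ X := by
  rcases hG.le_total_of_isCyclic_quotient hHK hHX.le with hKX | hXK
  · exact hKX
  have hprime : (H.relIndex X * X.relIndex K).Prime := by
    rw [relIndex_mul_relIndex H X K hHX.le hXK, hrel]
    exact Fact.out
  rcases Nat.prime_mul_iff.mp hprime with ⟨-, h⟩ | ⟨-, h⟩
  · exact relIndex_eq_one.mp h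
  · exact absurd (relIndex_eq_one.mp h) hHX.not_ge

end CoCyclic

theorem natCast_card_subgroup_ne_zero {F : Type*} [Field F] {G : Type*} [Group G] [Finite G]
    (hG : (Nat.card G : F) ≠ 0) (H : Subgroup G) : (Nat.card H : F) ≠ 0 :=
  ne_zero_of_dvd_ne_zero hG (Nat.cast_dvd_cast H.card_subgroup_dvd_card)

theorem MonoidHom.isCyclic_quotient_ker {A : Type*} [Field A] {G : Type*} [CommGroup G]
    [Finite G] (χ : G →* Aˣ) : IsCyclic (G ⧸ χ.ker) :=
  isCyclic_of_injective_ringHom ((Units.coeHom A).comp (QuotientGroup.kerLift χ))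
    fun _ _ h => QuotientGroup.kerLift_injective χ (Units.ext h)

section Characters

variable (F : Type*) [Field F] {A : Type*} [Field A] [Algebra F A] {G : Type*} [CommGroup G]

noncomputable def evalChar (χ : G →* Aˣ) : MonoidAlgebra F G →ₐ[F] A :=
  MonoidAlgebra.lift F A G ((Units.coeHom A).comp χ)

@[simp]
theorem evalChar_single (χ : G →* Aˣ) (g : G) (c : F) :
    evalChar F χ (MonoidAlgebra.single g c) = algebraMap F A c * χ g := by
  simp [evalChar, Algebra.smul_def]

variable {F} [Finite G] [HasEnoughRootsOfUnity A (Monoid.exponent G)]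

theorem sum_monoidHom_units_apply [Fintype (G →* Aˣ)] (a : G) :
    ∑ χ : G →* Aˣ, (χ a : A) = if a = 1 then (Nat.card G : A) else 0 := by
  split_ifs with ha
  · simp [ha, ← Nat.card_eq_fintype_card, CommGroup.card_monoidHom_of_hasEnoughRootsOfUnity]
  · obtain ⟨ψ, hψ⟩ := CommGroup.exists_apply_ne_one_of_hasEnoughRootsOfUnity G A ha
    refine sum_hom_units_eq_zero ((Units.coeHom A).comp (MonoidHom.eval a)) fun h => hψ ?_
    exact Units.val_eq_one.mp (DFunLike.congr_fun h ψ)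

theorem sum_inv_mul_evalChar [Fintype (G →* Aˣ)] (x : MonoidAlgebra F G) (g : G) :
    ∑ χ : G →* Aˣ, (χ g⁻¹ : A) * evalChar F χ x = Nat.card G * algebraMap F A (x.coeff g) := by
  induction x using MonoidAlgebra.induction_linear with
  | zero => simp
  | add x y hx hy =>
    simp only [map_add, mul_add, Finset.sum_add_distrib, hx, hy, MonoidAlgebra.coeff_add,
      Finsupp.add_apply]
  | single h c =>
    have hterm (χ : G →* Aˣ) : (χ g⁻¹ : A) * evalChar F χ (MonoidAlgebra.single h c) =
        algebraMap F A c * χ (g⁻¹ * h) := by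
      rw [evalChar_single, map_mul, Units.val_mul]
      ring
    simp only [hterm, ← Finset.mul_sum, sum_monoidHom_units_apply, inv_mul_eq_one,
      MonoidAlgebra.coeff_single, Finsupp.single_apply, eq_comm (a := h)]
    split_ifs <;> simp [mul_comm]

theorem eq_of_forall_evalChar_eq (hG : (Nat.card G : A) ≠ 0) {x y : MonoidAlgebra F G}
    (h : ∀ χ : G →* Aˣ, evalChar F χ x = evalChar F χ y) : x = y := by
  have := Fintype.ofFinite (G →* Aˣ)
  refine MonoidAlgebra.coeff_injective (Finsupp.ext fun g => ?_)
  have hg := sum_inv_mul_evalChar (A := A) x g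
  rw [Finset.sum_congr rfl fun χ _ => congrArg _ (h χ), sum_inv_mul_evalChar] at hg
  exact (algebraMap F A).injective (mul_left_cancel₀ hG hg).symm

end Characters

section Hat

variable {A : Type*} [Field A] {F : Type} [Field F] [Algebra F A] {G : Type} [CommGroup G]
  [Fintype G]

theorem evalChar_hat (H : Subgroup G) (hH : (Nat.card H : F) ≠ 0) (χ : G →* Aˣ) :
    evalChar F χ (hat F H) = if H ≤ χ.ker then 1 else 0 := by
  rw [hat, map_smul, map_sum]
  simp only [evalChar_single, map_one, one_mul]
  rw [Finset.sum_subtype (p := (· ∈ H)) _ (fun x => by simp) (fun g => (χ g : A)),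
    show ∑ h : H, (χ h : A) = ∑ h : H, (Units.coeHom A).comp (χ.comp H.subtype) h from rfl,
    sum_hom_units]
  have hrestrict : (Units.coeHom A).comp (χ.comp H.subtype) = 1 ↔ H ≤ χ.ker := by
    simp [MonoidHom.ext_iff, SetLike.le_def]
  simp only [hrestrict]
  split_ifs
  · rw [← Nat.card_eq_fintype_card, ← map_natCast (algebraMap F A), Algebra.smul_def, ← map_mul,
      inv_mul_cancel₀ hH, map_one]
  · simp

theorem evalChar_hat_sub_hat {p : ℕ} [hp : Fact p.Prime] (hG : IsPGroup p G)
    (hF : (Nat.card G : F) ≠ 0) {H K : Subgroup G} [IsCyclic (G ⧸ H)] (hHK : H ≤ K)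
    (hrel : H.relIndex K = p) (χ : G →* Aˣ) :
    evalChar F χ (hat F H - hat F K) = if H = χ.ker then 1 else 0 := by
  have hKH : ¬ K ≤ H := fun h => hp.out.one_lt.ne' (hrel ▸ Subgroup.relIndex_eq_one.mpr h)
  rw [map_sub, evalChar_hat H (natCast_card_subgroup_ne_zero hF H),
    evalChar_hat K (natCast_card_subgroup_ne_zero hF K)]
  by_cases hH : H = χ.ker
  · rw [if_pos hH.le, if_neg (hH ▸ hKH), if_pos hH, sub_zero]
  rw [if_neg hH]
  by_cases hle : H ≤ χ.ker
  · rw [if_pos hle, if_pos (Subgroup.le_of_lt_of_relIndex_eq_prime hG hHK hrel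
      (lt_of_le_of_ne hle hH)), sub_self]
  · rw [if_neg hle, if_neg fun h => hle (hHK.trans h), sub_self]

end Hat

theorem stmt4_general (p n : ℕ) (hp : p.Prime) (F : Type) [Field F]
    (G : Type) [CommGroup G] [Fintype G]
    (hexp : Monoid.exponent G = p ^ n)
    (hchar : ¬ (ringChar F ∣ Fintype.card G))
    -- `sharp H` is the unique subgroup `H♯` containing a co-cyclic subgroup `H`
    -- with `[H♯ : H] = p`
    (sharp : Subgroup G → Subgroup G)
    (hsharp : ∀ H : Subgroup G, IsCyclic (G ⧸ H) → Nontrivial (G ⧸ H) →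
      H ≤ sharp H ∧ H.relIndex (sharp H) = p)
    -- `S` is the set of all co-cyclic subgroups of `G`
    (S : Finset (Subgroup G))
    (hS : ∀ H : Subgroup G, H ∈ S ↔ (IsCyclic (G ⧸ H) ∧ Nontrivial (G ⧸ H))) :
    (hat F (⊤ : Subgroup G) + ∑ H ∈ S, (hat F H - hat F (sharp H)) = 1) ∧
    (∀ H ∈ S, hat F (⊤ : Subgroup G) * (hat F H - hat F (sharp H)) = 0) ∧
    (∀ H ∈ S, ∀ K ∈ S, H ≠ K →
      (hat F H - hat F (sharp H)) * (hat F K - hat F (sharp K)) = 0) := by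
  have : Fact p.Prime := ⟨hp⟩
  have hpG : IsPGroup p G := IsPGroup.of_exponent_dvd_pow hexp.dvd
  have hF : (Nat.card G : F) ≠ 0 := by
    rw [Nat.card_eq_fintype_card]
    exact (CharP.cast_eq_zero_iff F (ringChar F) _).not.mpr hchar
  have : NeZero (Monoid.exponent G : F) :=
    ⟨ne_zero_of_dvd_ne_zero hF (Nat.cast_dvd_cast Group.exponent_dvd_nat_card)⟩
  set A := AlgebraicClosure F
  have hA : (Nat.card G : A) ≠ 0 := by rwa [← map_natCast (algebraMap F A), map_ne_zero]
  have ev_top (χ : G →* Aˣ) : evalChar F χ (hat F ⊤) = if ⊤ = χ.ker then 1 else 0 := by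
    simp only [evalChar_hat ⊤ (natCast_card_subgroup_ne_zero hF ⊤), top_le_iff, eq_comm]
  have ev_sharp (χ : G →* Aˣ) (H : Subgroup G) (hH : H ∈ S) :
      evalChar F χ (hat F H - hat F (sharp H)) = if H = χ.ker then 1 else 0 := by
    obtain ⟨hcyc, hnt⟩ := (hS H).mp hH
    obtain ⟨hle, hrel⟩ := hsharp H hcyc hnt
    exact evalChar_hat_sub_hat hpG hF hle hrel χ
  have ne_top_of_mem (H : Subgroup G) (hH : H ∈ S) : H ≠ ⊤ :=
    QuotientGroup.nontrivial_iff.mp ((hS H).mp hH).2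
  have ker_mem (χ : G →* Aˣ) : χ.ker ∈ S ↔ χ.ker ≠ ⊤ := by
    rw [hS, QuotientGroup.nontrivial_iff]
    exact and_iff_right χ.isCyclic_quotient_ker
  refine ⟨?_, fun H hH => ?_, fun H hH K hK hHK => ?_⟩ <;>
    refine eq_of_forall_evalChar_eq hA fun χ => ?_
  · rw [map_add, map_sum, Finset.sum_congr rfl fun H hH => ev_sharp χ H hH, Finset.sum_ite_eq',
      ev_top, map_one]
    by_cases h : χ.ker = ⊤
    · simp [h, show ⊤ ∉ S from fun hmem => ne_top_of_mem ⊤ hmem rfl]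
    · simp [h, ker_mem, Ne.symm h]
  · rw [map_mul, ev_top, ev_sharp χ H hH, map_zero]
    have := ne_top_of_mem H hH
    split_ifs <;> simp_all
  · rw [map_mul, ev_sharp χ H hH, ev_sharp χ K hK, map_zero]
    split_ifs <;> simp_all

theorem stmt4 (p n : ℕ) (hp : p.Prime) (F : Type) [Field F] [Fintype F]
    (G : Type) [CommGroup G] [Fintype G]
    (hexp : Monoid.exponent G = p ^ n)
    (hchar : ¬ (ringChar F ∣ Fintype.card G))
    -- `sharp H` is the unique subgroup `H♯` containing a co-cyclic subgroup `H`
    -- with `[H♯ : H] = p`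
    (sharp : Subgroup G → Subgroup G)
    (hsharp : ∀ H : Subgroup G, IsCyclic (G ⧸ H) → Nontrivial (G ⧸ H) →
      H ≤ sharp H ∧ H.relIndex (sharp H) = p)
    -- `S` is the set of all co-cyclic subgroups of `G`
    (S : Finset (Subgroup G))
    (hS : ∀ H : Subgroup G, H ∈ S ↔ (IsCyclic (G ⧸ H) ∧ Nontrivial (G ⧸ H))) :
    (hat F (⊤ : Subgroup G) + ∑ H ∈ S, (hat F H - hat F (sharp H)) = 1) ∧
    (∀ H ∈ S, hat F (⊤ : Subgroup G) * (hat F H - hat F (sharp H)) = 0) ∧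
    (∀ H ∈ S, ∀ K ∈ S, H ≠ K →
      (hat F H - hat F (sharp H)) * (hat F K - hat F (sharp K)) = 0) :=
  stmt4_general p n hp F G hexp hchar sharp hsharp S hS
end

section
/- Let G = ⟨g⟩ be a cyclic group of order pⁿ and F_q a finite field such that the class of q generates the unit group U(Z_{pⁿ}). Then the idempotents e₀ = Ĝ and e_i = Ĝ_i − Ĝ_{i−1} (1 ≤ i ≤ n), where G_i = ⟨g^{p^i}⟩, form a complete set of primitive idempotents of F_q G. -/
open scoped Classical

/-- `e` is a primitive idempotent: a nonzero idempotent which is not the sum of two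
nonzero orthogonal idempotents. -/
def IsPrimIdem {R : Type} [Ring R] (e : R) : Prop :=
  e ≠ 0 ∧ e * e = e ∧
    ∀ a b : R, a * a = a → b * b = b → a * b = 0 → b * a = 0 → e = a + b →
      a = 0 ∨ b = 0

/-!
Since `q = |F|` is prime to `p`, each `Ĥ` is an idempotent with `Ĥ K̂ = Ĥ` for `K ≤ H`, so the
`Ĝ_i` form a chain of commuting idempotents: their successive differences `e_i` are orthogonal
idempotents whose sum telescopes to `Ĝ_n = 1`.

For primitivity, an idempotent `a` satisfies `a = a ^ q`, and raising to the `q`-th power sends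
`∑ a_x x` to `∑ a_x x ^ q`; hence the coefficients of `a` are constant on the orbits of
`x ↦ x ^ q`. As `q` generates `U(ℤ_{pⁿ})`, these orbits are the layers `G_j \ G_{j+1}`, so `a` is
an `F`-linear combination of the `Ĝ_j`, i.e. of the `e_j`. If `e_i = a + b` with `a, b`
orthogonal idempotents, then `a = a e_i` and `b = b e_i` are multiples of `e_i`, and `a b = 0`
forces one of them to vanish.
-/

section ChainDiff

variable {M : Type*} [AddCommGroup M]

def chainDiff (f : ℕ → M) : ℕ → M
  | 0 => f 0
  | i + 1 => f (i + 1) - f i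

theorem sum_range_chainDiff (f : ℕ → M) (m : ℕ) :
    ∑ i ∈ Finset.range (m + 1), chainDiff f i = f m := by
  induction m with
  | zero => simp [chainDiff]
  | succ m ih => rw [Finset.sum_range_succ, ih, chainDiff, add_sub_cancel]

theorem sum_range_ite_le_chainDiff (f : ℕ → M) {m n : ℕ} (hmn : m ≤ n) :
    ∑ i ∈ Finset.range (n + 1), (if i ≤ m then chainDiff f i else 0) = f m := by
  rw [← Finset.sum_filter, ← sum_range_chainDiff f m]
  congr 1
  ext i
  simp only [Finset.mem_filter, Finset.mem_range]
  omega

theorem span_image_Iic_le_span_chainDiff (F : Type*) [Semiring F] [Module F M]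
    (f : ℕ → M) (n : ℕ) :
    Submodule.span F (f '' Set.Iic n) ≤ Submodule.span F (chainDiff f '' Set.Iic n) := by
  rw [Submodule.span_le]
  rintro _ ⟨j, hj, rfl⟩
  rw [← sum_range_chainDiff f j]
  refine Submodule.sum_mem _ fun i hi => Submodule.subset_span ⟨i, ?_, rfl⟩
  simp only [Finset.mem_range] at hi
  simp only [Set.mem_Iic] at hj ⊢
  omega

end ChainDiff

section ChainOfIdempotents

variable {R : Type*} [Ring R] {f : ℕ → R}

theorem chainDiff_mul (hf : ∀ i j, f i * f j = f (min i j)) (i j : ℕ) :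
    chainDiff f i * f j = if i ≤ j then chainDiff f i else 0 := by
  cases i with
  | zero => simp [chainDiff, hf]
  | succ i =>
    rw [chainDiff, sub_mul, hf, hf]
    split_ifs with h
    · rw [min_eq_left h, min_eq_left (by omega)]
    · rw [min_eq_right (by omega), min_eq_right (by omega), sub_self]

theorem chainDiff_mul_chainDiff (hf : ∀ i j, f i * f j = f (min i j)) (i j : ℕ) :
    chainDiff f i * chainDiff f j = if i = j then chainDiff f i else 0 := by
  cases j with
  | zero => rw [chainDiff, chainDiff_mul hf]; simp only [Nat.le_zero]
  | succ j =>
    rw [chainDiff, mul_sub, chainDiff_mul hf, chainDiff_mul hf]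
    split_ifs <;> first | omega | simp

end ChainOfIdempotents

theorem isPrimIdem_of_forall_mem_span {F ι : Type*} {R : Type} [Field F] [Ring R] [Algebra F R]
    [DecidableEq ι]
    {e : ι → R} {s : Set ι} (horth : ∀ i ∈ s, ∀ j ∈ s, e i * e j = if i = j then e i else 0)
    (hspan : ∀ a : R, IsIdempotentElem a → a ∈ Submodule.span F (e '' s))
    {i : ι} (hi : i ∈ s) (hne : e i ≠ 0) : IsPrimIdem (e i) := by
  have hmul : ∀ a ∈ Submodule.span F (e '' s), ∃ c : F, a * e i = c • e i := by
    intro a ha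
    induction ha using Submodule.span_induction with
    | mem _ hx =>
      obtain ⟨j, hj, rfl⟩ := hx
      rw [horth j hj i hi]
      split_ifs with hji
      · exact ⟨1, by rw [hji, one_smul]⟩
      · exact ⟨0, (zero_smul F _).symm⟩
    | zero => exact ⟨0, by simp⟩
    | add _ _ _ _ hx hy =>
      obtain ⟨c, hc⟩ := hx
      obtain ⟨d, hd⟩ := hy
      exact ⟨c + d, by rw [add_mul, hc, hd, add_smul]⟩
    | smul r _ _ hx =>
      obtain ⟨c, hc⟩ := hx
      exact ⟨r * c, by rw [smul_mul_assoc, hc, smul_smul]⟩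
  have hii : e i * e i = e i := by simpa using horth i hi i hi
  refine ⟨hne, hii, fun a b ha hb hab hba hsum => ?_⟩
  obtain ⟨c, hc⟩ := hmul a (hspan a ha)
  obtain ⟨d, hd⟩ := hmul b (hspan b hb)
  have ha' : a = c • e i := by rw [← hc, hsum, mul_add, ha, hab, add_zero]
  have hb' : b = d • e i := by rw [← hd, hsum, mul_add, hb, hba, zero_add]
  have hcd : (c * d) • e i = 0 := by rw [← hab, ha', hb', smul_mul_smul_comm, hii]
  rcases mul_eq_zero.mp ((smul_eq_zero_iff_left hne).mp hcd) with h | h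
  · exact Or.inl (by rw [ha', h, zero_smul])
  · exact Or.inr (by rw [hb', h, zero_smul])

section Hat

variable {F : Type} [Field F] {G : Type} [Group G] [Fintype G]

theorem hat_coeff (H : Subgroup G) (x : G) :
    (hat F H).coeff x = if x ∈ H then (Nat.card H : F)⁻¹ else 0 := by
  simp [hat, MonoidAlgebra.coeff_sum, Finsupp.single_apply]

theorem hat_coeff_ne_zero_iff {H : Subgroup G} (hH : (Nat.card H : F) ≠ 0) {x : G} :
    (hat F H).coeff x ≠ 0 ↔ x ∈ H := by
  rw [hat_coeff]
  split_ifs with hx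
  exacts [iff_of_true (inv_ne_zero hH) hx, iff_of_false (not_not.2 rfl) hx]

theorem hat_ne_zero {H : Subgroup G} (hH : (Nat.card H : F) ≠ 0) : hat F H ≠ 0 := fun h =>
  (hat_coeff_ne_zero_iff hH).mpr H.one_mem (by rw [h]; rfl)

theorem eq_of_hat_eq {H K : Subgroup G} (hH : (Nat.card H : F) ≠ 0)
    (hK : (Nat.card K : F) ≠ 0) (h : hat F H = hat F K) : H = K := by
  ext x
  rw [← hat_coeff_ne_zero_iff hH, h, hat_coeff_ne_zero_iff hK]

theorem hat_bot : hat F (⊥ : Subgroup G) = 1 := by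
  simp [hat, MonoidAlgebra.one_def]

theorem hat_mul_single {H : Subgroup G} {x : G} (hx : x ∈ H) :
    hat F H * MonoidAlgebra.single x 1 = hat F H := by
  rw [hat, smul_mul_assoc, Finset.sum_mul]
  simp only [MonoidAlgebra.single_mul_single, mul_one]
  congr 1
  refine Finset.sum_equiv (Equiv.mulRight x) (fun h => ?_) (fun _ _ => rfl)
  simp [H.mul_mem_cancel_right hx]

theorem single_mul_hat {H : Subgroup G} {x : G} (hx : x ∈ H) :
    MonoidAlgebra.single x 1 * hat F H = hat F H := by
  rw [hat, mul_smul_comm, Finset.mul_sum]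
  simp only [MonoidAlgebra.single_mul_single, one_mul]
  congr 1
  refine Finset.sum_equiv (Equiv.mulLeft x) (fun h => ?_) (fun _ _ => rfl)
  simp [H.mul_mem_cancel_left hx]

theorem hat_mul_hat_of_le {H K : Subgroup G} (hKH : K ≤ H) (hK : (Nat.card K : F) ≠ 0) :
    hat F H * hat F K = hat F H := by
  conv_lhs => arg 2; rw [hat]
  rw [mul_smul_comm, Finset.mul_sum,
    Finset.sum_congr rfl fun k hk => hat_mul_single (hKH (Set.mem_toFinset.mp hk)),
    Finset.sum_const, ← Nat.card_eq_card_toFinset, SetLike.coe_sort_coe,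
    ← Nat.cast_smul_eq_nsmul F, smul_smul, inv_mul_cancel₀ hK, one_smul]

theorem hat_mul_hat_of_ge {H K : Subgroup G} (hKH : K ≤ H) (hK : (Nat.card K : F) ≠ 0) :
    hat F K * hat F H = hat F H := by
  conv_lhs => arg 1; rw [hat]
  rw [smul_mul_assoc, Finset.sum_mul,
    Finset.sum_congr rfl fun k hk => single_mul_hat (hKH (Set.mem_toFinset.mp hk)),
    Finset.sum_const, ← Nat.card_eq_card_toFinset, SetLike.coe_sort_coe,
    ← Nat.cast_smul_eq_nsmul F, smul_smul, inv_mul_cancel₀ hK, one_smul]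

theorem hat_mul_hat_of_antitone {H : ℕ → Subgroup G} (hH : Antitone H)
    (hcard : ∀ j, (Nat.card (H j) : F) ≠ 0) (i j : ℕ) :
    hat F (H i) * hat F (H j) = hat F (H (min i j)) := by
  rcases le_total i j with h | h
  · rw [min_eq_left h, hat_mul_hat_of_le (hH h) (hcard j)]
  · rw [min_eq_right h, hat_mul_hat_of_ge (hH h) (hcard i)]

end Hat

theorem FiniteField.natCast_ne_zero_of_coprime {F : Type*} [Field F] [Fintype F] {N : ℕ}
    (h : (Fintype.card F).Coprime N) : (N : F) ≠ 0 := by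
  obtain ⟨ℓ, hchar, m, hℓ, hq⟩ := FiniteField.card' F
  intro hN
  have hℓq : ℓ ∣ Fintype.card F := hq ▸ dvd_pow_self ℓ m.ne_zero
  have hℓN : ℓ ∣ N := (CharP.cast_eq_zero_iff F ℓ N).mp hN
  exact hℓ.one_lt.ne' (Nat.eq_one_of_dvd_coprimes h hℓq hℓN)

theorem Subgroup.natCast_card_ne_zero {R G : Type*} [Semiring R] [Group G]
    (hG : (Nat.card G : R) ≠ 0) (K : Subgroup G) : (Nat.card K : R) ≠ 0 := fun hK =>
  hG (zero_dvd_iff.mp (hK ▸ Nat.cast_dvd_cast K.card_subgroup_dvd_card))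

theorem Subgroup.pow_mem_iff_of_coprime {G : Type*} [Group G] (K : Subgroup G) {m : ℕ}
    (h : (Nat.card G).Coprime m) {x : G} : x ^ m ∈ K ↔ x ∈ K := by
  refine ⟨fun hx => ?_, fun hx => K.pow_mem hx m⟩
  rw [← (powCoprime h).symm_apply_apply x]
  exact K.zpow_mem hx _

theorem MonoidAlgebra.pow_card_eq_mapDomain {F G : Type*} [Field F] [Fintype F] [CommMonoid G]
    (a : MonoidAlgebra F G) :
    a ^ Fintype.card F = MonoidAlgebra.mapDomain (· ^ Fintype.card F) a := by
  have : FiniteField.frobeniusAlgHom F (MonoidAlgebra F G) =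
      MonoidAlgebra.mapDomainAlgHom F F (powMonoidHom (Fintype.card F)) := by
    ext x
    simp
  exact congr($this a)

section Idempotent

variable {F G : Type*} [Field F] [Fintype F] [CommGroup G]
  {a : MonoidAlgebra F G}

theorem IsIdempotentElem.coeff_pow_card (hcop : (Nat.card G).Coprime (Fintype.card F))
    (ha : IsIdempotentElem a) (x : G) : a.coeff (x ^ Fintype.card F) = a.coeff x := by
  have hmap : MonoidAlgebra.mapDomain (· ^ Fintype.card F) a = a := by
    rw [← MonoidAlgebra.pow_card_eq_mapDomain, ha.pow_eq Fintype.card_ne_zero]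
  conv_lhs => rw [← hmap]
  exact Finsupp.mapDomain_apply hcop.pow_left_bijective.injective a.coeff x

theorem IsIdempotentElem.coeff_pow_card_pow (hcop : (Nat.card G).Coprime (Fintype.card F))
    (ha : IsIdempotentElem a) (x : G) (k : ℕ) :
    a.coeff (x ^ Fintype.card F ^ k) = a.coeff x := by
  induction k with
  | zero => rw [pow_zero, pow_one]
  | succ k ih => rw [pow_succ, pow_mul, ha.coeff_pow_card hcop, ih]

end Idempotent

section PrimePowerCyclic

variable {G : Type*} [Group G] {g : G} {p n : ℕ}

theorem orderOf_pow_prime_pow (hp : p ≠ 0) (hg : orderOf g = p ^ n) {j : ℕ} (hj : j ≤ n) :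
    orderOf (g ^ p ^ j) = p ^ (n - j) := by
  rw [orderOf_pow_of_dvd (pow_ne_zero j hp) (hg ▸ pow_dvd_pow p hj), hg, Nat.pow_div hj hp.bot_lt]

theorem antitone_zpowers_pow_pow (g : G) (p : ℕ) :
    Antitone fun j : ℕ => Subgroup.zpowers (g ^ p ^ j) :=
  antitone_nat_of_succ_le fun j => Subgroup.zpowers_le.mpr <| by
    rw [pow_succ, pow_mul]
    exact Subgroup.pow_mem _ (Subgroup.mem_zpowers _) p

theorem pow_prime_pow_mem_zpowers_iff (hp : p.Prime) (hg : orderOf g = p ^ n) {i j : ℕ}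
    (hi : i ≤ n) (hj : j ≤ n) : g ^ p ^ j ∈ Subgroup.zpowers (g ^ p ^ i) ↔ i ≤ j := by
  refine ⟨fun h => ?_, fun h => antitone_zpowers_pow_pow g p h (Subgroup.mem_zpowers _)⟩
  have hdvd := Subgroup.orderOf_dvd_natCard _ h
  rw [Nat.card_zpowers, orderOf_pow_prime_pow hp.ne_zero hg hi,
    orderOf_pow_prime_pow hp.ne_zero hg hj, Nat.pow_dvd_pow_iff_le_right hp.one_lt] at hdvd
  omega

theorem exists_pow_modEq_of_forall_mem_zpowers {q N : ℕ} [NeZero N] (hu : IsUnit (q : ZMod N))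
    (hgenU : ∀ v : (ZMod N)ˣ, v ∈ Subgroup.zpowers hu.unit) {u : ℕ} (hu' : u.Coprime N) :
    ∃ k : ℕ, q ^ k ≡ u [MOD N] := by
  obtain ⟨k, hk⟩ := mem_powers_iff_mem_zpowers.mpr (hgenU (ZMod.unitOfCoprime u hu'))
  refine ⟨k, (ZMod.natCast_eq_natCast_iff _ _ _).mp ?_⟩
  have hval := congrArg Units.val hk
  rw [Units.val_pow_eq_pow_val, IsUnit.unit_spec, ZMod.coe_unitOfCoprime] at hval
  exact_mod_cast hval

theorem exists_eq_pow_prime_pow_pow (hp : p.Prime) (hg : orderOf g = p ^ n) {q : ℕ}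
    (hu : IsUnit (q : ZMod (p ^ n)))
    (hgenU : ∀ v : (ZMod (p ^ n))ˣ, v ∈ Subgroup.zpowers hu.unit) (t : ℕ) :
    ∃ j ≤ n, ∃ k : ℕ, g ^ t = (g ^ p ^ j) ^ q ^ k := by
  have : NeZero (p ^ n) := ⟨pow_ne_zero n hp.ne_zero⟩
  rw [← pow_mod_orderOf, hg]
  rcases eq_or_ne (t % p ^ n) 0 with h0 | h0
  · exact ⟨n, le_rfl, 0, by rw [h0, pow_zero, pow_zero, pow_one, ← hg, pow_orderOf_eq_one]⟩
  obtain ⟨j, u, hpu, hju⟩ := Nat.exists_eq_pow_mul_and_not_dvd h0 p hp.ne_one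
  have hjn : j < n := by
    have hle : p ^ j ≤ t % p ^ n := Nat.le_of_dvd (Nat.pos_of_ne_zero h0) (hju ▸ dvd_mul_right _ _)
    exact (Nat.pow_lt_pow_iff_right hp.one_lt).mp (hle.trans_lt (Nat.mod_lt t (NeZero.pos _)))
  obtain ⟨k, hk⟩ := exists_pow_modEq_of_forall_mem_zpowers hu hgenU
    (((Nat.Prime.coprime_iff_not_dvd hp).mpr hpu).symm.pow_right n)
  refine ⟨j, hjn.le, k, ?_⟩
  rw [hju, ← pow_mul, pow_eq_pow_iff_modEq, hg]
  exact (hk.mul_left _).symm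

end PrimePowerCyclic

theorem mem_span_hat_of_isIdempotentElem {F : Type} [Field F] [Fintype F] {G : Type}
    [CommGroup G] [Fintype G] {g : G} {p n : ℕ} (hp : p.Prime)
    (hgen : ∀ x : G, x ∈ Subgroup.zpowers g) (hg : orderOf g = p ^ n)
    (hu : IsUnit ((Fintype.card F : ZMod (p ^ n))))
    (hgenU : ∀ v : (ZMod (p ^ n))ˣ, v ∈ Subgroup.zpowers hu.unit)
    {a : MonoidAlgebra F G} (ha : IsIdempotentElem a) :
    a ∈ Submodule.span F ((fun j => hat F (Subgroup.zpowers (g ^ p ^ j))) '' Set.Iic n) := by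
  have hcop : (Nat.card G).Coprime (Fintype.card F) := by
    rw [← orderOf_eq_card_of_forall_mem_zpowers hgen, hg]
    exact ((ZMod.isUnit_iff_coprime _ _).mp hu).symm
  have hcard : ∀ K : Subgroup G, (Nat.card K : F) ≠ 0 :=
    Subgroup.natCast_card_ne_zero (FiniteField.natCast_ne_zero_of_coprime hcop.symm)
  set u : ℕ → F := fun j => a.coeff (g ^ p ^ j)
  -- every `x` is `(g ^ p ^ m) ^ q ^ k`, where `a` takes the value `u m`, and `x` lies in the
  -- `j`-th subgroup iff `j ≤ m`
  have hsum : a = ∑ j ∈ Finset.range (n + 1),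
      ((Nat.card (Subgroup.zpowers (g ^ p ^ j)) : F) * chainDiff u j) •
        hat F (Subgroup.zpowers (g ^ p ^ j)) := by
    ext x
    obtain ⟨t, rfl⟩ : ∃ t : ℕ, g ^ t = x := mem_powers_iff_mem_zpowers.mpr (hgen x)
    obtain ⟨m, hm, k, hx⟩ := exists_eq_pow_prime_pow_pow hp hg hu hgenU t
    rw [hx, ha.coeff_pow_card_pow hcop, MonoidAlgebra.coeff_sum, Finsupp.finsetSum_apply]
    refine (sum_range_ite_le_chainDiff u hm).symm.trans (Finset.sum_congr rfl fun j hj => ?_)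
    have hjn : j ≤ n := Nat.lt_succ_iff.mp (Finset.mem_range.mp hj)
    rw [MonoidAlgebra.coeff_smul, Finsupp.smul_apply, hat_coeff,
      Subgroup.pow_mem_iff_of_coprime _ (hcop.pow_right k),
      pow_prime_pow_mem_zpowers_iff hp hg hjn hm]
    split_ifs
    · rw [smul_eq_mul, mul_comm, ← mul_assoc, inv_mul_cancel₀ (hcard _), one_mul]
    · rw [smul_zero]
  rw [hsum]
  refine Submodule.sum_mem _ fun j hj => Submodule.smul_mem _ _ (Submodule.subset_span ?_)
  exact ⟨j, Nat.lt_succ_iff.mp (Finset.mem_range.mp hj), rfl⟩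

theorem chainDiff_hat_zpowers_ne_zero {F : Type} [Field F] {G : Type} [Group G] [Fintype G]
    {g : G} {p n : ℕ} (hp : p.Prime) (hg : orderOf g = p ^ n)
    (hcard : ∀ K : Subgroup G, (Nat.card K : F) ≠ 0) {i : ℕ} (hi : i ≤ n) :
    chainDiff (fun j => hat F (Subgroup.zpowers (g ^ p ^ j))) i ≠ 0 := by
  cases i with
  | zero => exact hat_ne_zero (hcard _)
  | succ i =>
    refine sub_ne_zero.mpr fun h => ?_
    have hmem : g ^ p ^ i ∈ Subgroup.zpowers (g ^ p ^ (i + 1)) :=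
      (eq_of_hat_eq (hcard _) (hcard _) h).symm ▸ Subgroup.mem_zpowers _
    rw [pow_prime_pow_mem_zpowers_iff hp hg hi (by omega)] at hmem
    omega

theorem stmt6_general (p n : ℕ) (hp : p.Prime)
    (F : Type) [Field F] [Fintype F]
    (G : Type) [Group G] [Fintype G] (g : G)
    (hgen : ∀ x : G, x ∈ Subgroup.zpowers g) (hcard : Fintype.card G = p ^ n)
    -- the class of `q = |F|` generates the unit group `U(ℤ_{pⁿ})`
    (hu : IsUnit ((Fintype.card F : ZMod (p ^ n))))
    (hgenU : ∀ v : (ZMod (p ^ n))ˣ, v ∈ Subgroup.zpowers hu.unit)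
    (e : ℕ → MonoidAlgebra F G)
    (he0 : e 0 = hat F (⊤ : Subgroup G))
    (hei : ∀ i, 1 ≤ i → i ≤ n →
      e i = hat F (Subgroup.zpowers (g ^ p ^ i)) - hat F (Subgroup.zpowers (g ^ p ^ (i - 1)))) :
    (∀ i ≤ n, IsPrimIdem (e i)) ∧
    (∀ i ≤ n, ∀ j ≤ n, i ≠ j → e i * e j = 0) ∧
    (∑ i ∈ Finset.range (n + 1), e i = 1) := by
  have hg : orderOf g = p ^ n := by
    rw [orderOf_eq_card_of_forall_mem_zpowers hgen, Nat.card_eq_fintype_card, hcard]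
  have hcardH : ∀ K : Subgroup G, (Nat.card K : F) ≠ 0 := Subgroup.natCast_card_ne_zero <| by
    rw [Nat.card_eq_fintype_card, hcard]
    exact FiniteField.natCast_ne_zero_of_coprime ((ZMod.isUnit_iff_coprime _ _).mp hu)
  set f : ℕ → MonoidAlgebra F G := fun j => hat F (Subgroup.zpowers (g ^ p ^ j))
  have hf : ∀ i j, f i * f j = f (min i j) :=
    hat_mul_hat_of_antitone (antitone_zpowers_pow_pow g p) fun j => hcardH _
  have he : ∀ i ≤ n, e i = chainDiff f i := by
    rintro (_ | i) hi
    · rw [he0, chainDiff]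
      show _ = hat F (Subgroup.zpowers (g ^ p ^ 0))
      rw [pow_zero, pow_one, (Subgroup.eq_top_iff' _).mpr hgen]
    · rw [hei (i + 1) (Nat.le_add_left 1 i) hi, chainDiff, Nat.add_sub_cancel]
  have hspan : ∀ a, IsIdempotentElem a → a ∈ Submodule.span F (chainDiff f '' Set.Iic n) :=
    fun a ha => span_image_Iic_le_span_chainDiff F f n <| by
      have : IsCyclic G := ⟨⟨g, hgen⟩⟩
      let _ := IsCyclic.commGroup (α := G)
      exact mem_span_hat_of_isIdempotentElem hp hgen hg hu hgenU ha
  refine ⟨fun i hi => ?_, fun i hi j hj hij => ?_, ?_⟩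
  · rw [he i hi]
    exact isPrimIdem_of_forall_mem_span (fun i _ j _ => chainDiff_mul_chainDiff hf i j) hspan
      (Set.mem_Iic.mpr hi)
      (chainDiff_hat_zpowers_ne_zero hp hg hcardH hi)
  · rw [he i hi, he j hj, chainDiff_mul_chainDiff hf, if_neg hij]
  · rw [Finset.sum_congr rfl fun i hi => he i (Nat.lt_succ_iff.mp (Finset.mem_range.mp hi)),
      sum_range_chainDiff]
    show hat F (Subgroup.zpowers (g ^ p ^ n)) = 1
    rw [← hg, pow_orderOf_eq_one, Subgroup.zpowers_one_eq_bot, hat_bot]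

theorem stmt6 (p n : ℕ) (hp : p.Prime) (hn : 1 ≤ n)
    (F : Type) [Field F] [Fintype F]
    (G : Type) [Group G] [Fintype G] (g : G)
    (hgen : ∀ x : G, x ∈ Subgroup.zpowers g) (hcard : Fintype.card G = p ^ n)
    -- the class of `q = |F|` generates the unit group `U(ℤ_{pⁿ})`
    (hu : IsUnit ((Fintype.card F : ZMod (p ^ n))))
    (hgenU : ∀ v : (ZMod (p ^ n))ˣ, v ∈ Subgroup.zpowers hu.unit)
    (e : ℕ → MonoidAlgebra F G)
    (he0 : e 0 = hat F (⊤ : Subgroup G))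
    (hei : ∀ i, 1 ≤ i → i ≤ n →
      e i = hat F (Subgroup.zpowers (g ^ p ^ i)) - hat F (Subgroup.zpowers (g ^ p ^ (i - 1)))) :
    (∀ i ≤ n, IsPrimIdem (e i)) ∧
    (∀ i ≤ n, ∀ j ≤ n, i ≠ j → e i * e j = 0) ∧
    (∑ i ∈ Finset.range (n + 1), e i = 1) :=
  stmt6_general p n hp F G g hgen hcard hu hgenU e he0 hei
end

section
/- Let G be a cyclic group of order 2pⁿ for an odd prime p, written G = C × A with C = {1,t} of order 2 and A the p-Sylow subgroup, and let F_q be a finite field with ord(q) = φ(pⁿ) in U(Z_{2pⁿ}). If e₀,...,eₙ are the primitive idempotents of F_q A, then the primitive idempotents of F_q G are exactly ((1+t)/2)·e_i and ((1−t)/2)·e_i for 0 ≤ i ≤ n. -/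
open scoped Classical

/-! Write `t` for the generator of `C`. The elements `u± = (1 ± t)/2` are orthogonal idempotents
summing to `1`, and the specialization `t ↦ ±1` identifies the corner `F G · u±` with `F A`, so
`u± · eᵢ` is primitive. Conversely a primitive idempotent `x` of `F G` satisfies `x = x u±` for one
sign and `x = x eᵢ` for one `i`, since both families sum to `1`; then `x ≤ u± eᵢ`, and primitivity
of `u± eᵢ` forces equality. -/

open MonoidAlgebra

theorem Int.exists_units_iff {P : ℤˣ → Prop} : (∃ u, P u) ↔ P 1 ∨ P (-1) := by
  constructor
  · rintro ⟨u, hu⟩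
    rcases Int.units_eq_one_or u with rfl | rfl
    exacts [Or.inl hu, Or.inr hu]
  · rintro (h | h)
    exacts [⟨1, h⟩, ⟨-1, h⟩]

theorem IsIdempotentElem.mul_add_eq_self_of_mul_eq_zero {R : Type*} [Semiring R] {a b : R}
    (ha : IsIdempotentElem a) (hab : a * b = 0) : a * (a + b) = a := by
  rw [mul_add, ha.eq, hab, add_zero]

namespace IsPrimIdem

variable {R : Type} [CommRing R] {x : R}

theorem isIdempotentElem (hx : IsPrimIdem x) : IsIdempotentElem x := hx.2.1

theorem mul_eq_self_or_mul_eq_zero (hx : IsPrimIdem x) {e : R} (he : IsIdempotentElem e) :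
    x * e = x ∨ x * e = 0 := by
  have hxe : IsIdempotentElem (x * e) := hx.isIdempotentElem.mul he
  have hxe' : IsIdempotentElem (x * (1 - e)) := hx.isIdempotentElem.mul he.one_sub
  have horth : x * e * (x * (1 - e)) = 0 := by
    rw [mul_mul_mul_comm, hx.isIdempotentElem.eq, he.mul_one_sub_self, mul_zero]
  rcases hx.2.2 _ _ hxe hxe' horth (by rw [mul_comm, horth]) (by ring) with h | h
  · exact Or.inr h
  · rw [mul_sub, mul_one, sub_eq_zero] at h
    exact Or.inl h.symm

theorem exists_mul_eq_self {ι : Type*} (hx : IsPrimIdem x) (s : Finset ι) (c : ι → R)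
    (hc : ∀ j ∈ s, IsIdempotentElem (c j)) (hsum : ∑ j ∈ s, c j = 1) :
    ∃ j ∈ s, x * c j = x := by
  by_contra! h
  apply hx.1
  calc x = ∑ j ∈ s, x * c j := by rw [← Finset.mul_sum, hsum, mul_one]
    _ = 0 := Finset.sum_eq_zero fun j hj =>
      (hx.mul_eq_self_or_mul_eq_zero (hc j hj)).resolve_left (h j hj)

theorem eq_of_mul_eq_self {f : R} (hf : IsPrimIdem f) (hx : IsIdempotentElem x) (hx0 : x ≠ 0)
    (hxf : x * f = x) : x = f := by
  have hfx : IsIdempotentElem (f - x) := by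
    unfold IsIdempotentElem
    linear_combination hf.isIdempotentElem.eq + hx.eq - 2 * hxf
  have horth : x * (f - x) = 0 := by rw [mul_sub, hxf, hx.eq, sub_self]
  rcases hf.2.2 x (f - x) hx hfx horth (by rw [mul_comm, horth]) (by ring) with h | h
  · exact absurd h hx0
  · exact (sub_eq_zero.mp h).symm

/-- The hypotheses say that `π` maps the corner `R u` isomorphically onto `S`, with inverse
`s ↦ ι s * u`. -/
theorem mul_map_of_corner {S : Type} [CommRing S] (π : R →+* S) (ι : S →+* R) {u : R}
    (hπu : π u = 1) (hπι : ∀ s, π (ι s) = s) (hιπ : ∀ y, ι (π y) * u = y * u) {e : S}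
    (he : IsPrimIdem e) : IsPrimIdem (u * ι e) := by
  have hu : IsIdempotentElem u := by
    have := hιπ u
    rwa [hπu, map_one, one_mul, eq_comm] at this
  have hπf : π (u * ι e) = e := by rw [map_mul, hπu, hπι, one_mul]
  refine ⟨fun h => he.1 (by rw [← hπf, h, map_zero]), ?_, ?_⟩
  · rw [mul_mul_mul_comm, hu.eq, ← map_mul, he.2.1]
  · intro a b ha hb hab hba hsum
    have hcorner : ∀ y, y * (u * ι e) = y → ι (π y) * u = y := fun y hy => by
      rw [hιπ]
      linear_combination (1 - u) * hy + (y * ι e) * hu.eq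
    have hau : a * (u * ι e) = a := by
      rw [hsum]; exact IsIdempotentElem.mul_add_eq_self_of_mul_eq_zero ha hab
    have hbu : b * (u * ι e) = b := by
      rw [hsum, add_comm]; exact IsIdempotentElem.mul_add_eq_self_of_mul_eq_zero hb hba
    have hπsum : e = π a + π b := by rw [← map_add, ← hsum, hπf]
    refine (he.2.2 _ _ (by rw [← map_mul, ha]) (by rw [← map_mul, hb])
      (by rw [← map_mul, hab, map_zero]) (by rw [← map_mul, hba, map_zero]) hπsum).imp
      (fun h => ?_) (fun h => ?_)
    · rw [← hcorner a hau, h, map_zero, zero_mul]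
    · rw [← hcorner b hbu, h, map_zero, zero_mul]

end IsPrimIdem

def signChar (σ : ℤˣ) : Multiplicative (ZMod 2) →* ℤˣ where
  toFun c := σ ^ c.toAdd
  map_one' := uzpow_zero σ
  map_mul' _ _ := uzpow_add σ _ _

theorem signChar_ofAdd_one (σ : ℤˣ) : signChar σ (Multiplicative.ofAdd 1) = σ := uzpow_one σ

section

variable {F : Type} [Field F] {A : Type} [CommMonoid A]

local notation "𝐭" =>
  single ((Multiplicative.ofAdd (1 : ZMod 2), 1) : Multiplicative (ZMod 2) × A) (1 : F)

local notation "ι" => mapDomainAlgHom F F (MonoidHom.inr (Multiplicative (ZMod 2)) A)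

variable (F A) in
noncomputable def signIdem (σ : ℤˣ) : MonoidAlgebra F (Multiplicative (ZMod 2) × A) :=
  (2 : F)⁻¹ • (1 + (σ : ℤ) • 𝐭)

variable (F A) in
noncomputable def signProj (σ : ℤˣ) :
    MonoidAlgebra F (Multiplicative (ZMod 2) × A) →ₐ[F] MonoidAlgebra F A :=
  lift F _ _ <| MonoidHom.coprod
    ((Int.castRingHom _).toMonoidHom.comp ((Units.coeHom ℤ).comp (signChar σ))) (of F A)

theorem single_t_mul_self : 𝐭 * 𝐭 = (1 : MonoidAlgebra F (Multiplicative (ZMod 2) × A)) := by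
  rw [single_mul_single, one_mul, one_def]
  exact congrArg (single · 1) (Prod.ext
    (show (Multiplicative.ofAdd (1 : ZMod 2) * Multiplicative.ofAdd 1 : Multiplicative (ZMod 2))
      = 1 by decide) (one_mul 1))

theorem single_t_mul_signIdem (σ : ℤˣ) : 𝐭 * signIdem F A σ = (σ : ℤ) • signIdem F A σ := by
  rw [signIdem, mul_smul_comm, smul_comm, mul_add, mul_one, mul_smul_comm, single_t_mul_self,
    smul_add (σ : ℤ), smul_smul, Int.units_coe_mul_self, one_smul, add_comm]

theorem isIdempotentElem_signIdem (h2 : (2 : F) ≠ 0) (σ : ℤˣ) :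
    IsIdempotentElem (signIdem F A σ) := by
  unfold IsIdempotentElem
  nth_rw 1 [signIdem]
  rw [smul_mul_assoc, add_mul, one_mul, smul_mul_assoc, single_t_mul_signIdem, smul_smul,
    Int.units_coe_mul_self, one_smul, ← two_smul F, smul_smul, inv_mul_cancel₀ h2, one_smul]

theorem signIdem_neg (h2 : (2 : F) ≠ 0) (σ : ℤˣ) :
    signIdem F A (-σ) = 1 - signIdem F A σ := by
  rw [signIdem, signIdem, Units.val_neg, neg_smul, eq_sub_iff_add_eq, ← smul_add,
    add_add_add_comm, neg_add_cancel, add_zero, ← two_smul F, smul_smul, inv_mul_cancel₀ h2,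
    one_smul]

theorem single_mul_signIdem (σ : ℤˣ) (c : Multiplicative (ZMod 2)) :
    single (c, 1) 1 * signIdem F A σ = (signChar σ c : ℤ) • signIdem F A σ := by
  obtain rfl | rfl : c = 1 ∨ c = Multiplicative.ofAdd 1 := by revert c; decide
  · rw [Prod.mk_one_one, ← one_def, one_mul, map_one, Units.val_one, one_smul]
  · rw [signChar_ofAdd_one]
    exact single_t_mul_signIdem σ

theorem signProj_of (σ : ℤˣ) (c : Multiplicative (ZMod 2)) (a : A) :
    signProj F A σ (of F _ (c, a)) = (signChar σ c : ℤ) • of F A a := by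
  rw [signProj, lift_of, MonoidHom.coprod_apply]
  exact (zsmul_eq_mul _ _).symm

theorem signProj_signIdem (h2 : (2 : F) ≠ 0) (σ : ℤˣ) :
    signProj F A σ (signIdem F A σ) = 1 := by
  rw [signIdem, map_smul, map_add, map_one, map_zsmul, ← of_apply, signProj_of,
    signChar_ofAdd_one, smul_smul, Int.units_coe_mul_self, one_smul, of_apply, ← one_def,
    ← two_smul F, smul_smul, inv_mul_cancel₀ h2, one_smul]

theorem signProj_inr (σ : ℤˣ) : (signProj F A σ).comp ι = AlgHom.id F (MonoidAlgebra F A) := by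
  ext a
  simp [signProj]

theorem inr_signProj_mul_signIdem (σ : ℤˣ) (y : MonoidAlgebra F (Multiplicative (ZMod 2) × A)) :
    ι (signProj F A σ y) * signIdem F A σ = y * signIdem F A σ := by
  induction y using MonoidAlgebra.induction_on with
  | of g =>
    obtain ⟨c, a⟩ := g
    have hsplit : of F _ (c, a) = ι (of F A a) * single (c, 1) 1 := by
      rw [mapDomainAlgHom_apply, of_apply, of_apply, mapDomain_single, single_mul_single,
        MonoidHom.inr_apply, Prod.mk_mul_mk, one_mul, mul_one, one_mul]
    rw [signProj_of, map_zsmul, hsplit, mul_assoc, single_mul_signIdem, smul_mul_assoc,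
      mul_smul_comm]
  | add y z hy hz => rw [map_add, map_add, add_mul, add_mul, hy, hz]
  | smul r y hy => rw [map_smul, map_smul, smul_mul_assoc, smul_mul_assoc, hy]

theorem signIdem_one : signIdem F A 1 = (2 : F)⁻¹ • (1 + 𝐭) := by
  rw [signIdem, Units.val_one, one_smul]

theorem signIdem_neg_one : signIdem F A (-1) = (2 : F)⁻¹ • (1 - 𝐭) := by
  rw [signIdem, Units.val_neg, Units.val_one, neg_one_smul, sub_eq_add_neg]

theorem isPrimIdem_signIdem_mul_inr (h2 : (2 : F) ≠ 0) (σ : ℤˣ) {e : MonoidAlgebra F A}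
    (he : IsPrimIdem e) : IsPrimIdem (signIdem F A σ * ι e) :=
  he.mul_map_of_corner (signProj F A σ).toRingHom (AlgHom.toRingHom ι) (signProj_signIdem h2 σ)
    (AlgHom.congr_fun (signProj_inr σ)) (inr_signProj_mul_signIdem σ)

theorem IsPrimIdem.exists_mul_signIdem_eq_self (h2 : (2 : F) ≠ 0)
    {x : MonoidAlgebra F (Multiplicative (ZMod 2) × A)} (hx : IsPrimIdem x) :
    ∃ σ : ℤˣ, x * signIdem F A σ = x :=
  (hx.mul_eq_self_or_mul_eq_zero (isIdempotentElem_signIdem h2 1)).elim (fun h => ⟨1, h⟩) fun h =>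
    ⟨-1, by rw [signIdem_neg h2, mul_sub, mul_one, h, sub_zero]⟩

theorem isPrimIdem_iff_exists_signIdem_mul_inr (h2 : (2 : F) ≠ 0) {ι' : Type*} (s : Finset ι')
    (E : ι' → MonoidAlgebra F A) (hEprim : ∀ i ∈ s, IsPrimIdem (E i))
    (hEsum : ∑ i ∈ s, E i = 1) (x : MonoidAlgebra F (Multiplicative (ZMod 2) × A)) :
    IsPrimIdem x ↔ ∃ i ∈ s, ∃ σ : ℤˣ, x = signIdem F A σ * ι (E i) := by
  constructor
  · intro hx
    obtain ⟨σ, hσ⟩ := hx.exists_mul_signIdem_eq_self h2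
    obtain ⟨i, hi, hi'⟩ := hx.exists_mul_eq_self s (fun i => ι (E i))
      (fun i hi => (hEprim i hi).isIdempotentElem.map ι) (by rw [← map_sum, hEsum, map_one])
    exact ⟨i, hi, σ, (isPrimIdem_signIdem_mul_inr h2 σ (hEprim i hi)).eq_of_mul_eq_self
      hx.isIdempotentElem hx.1 (by rw [← mul_assoc, hσ, hi'])⟩
  · rintro ⟨i, hi, σ, rfl⟩
    exact isPrimIdem_signIdem_mul_inr h2 σ (hEprim i hi)

end

theorem two_ne_zero_of_odd_card {F : Type*} [Field F] [Fintype F] (h : Odd (Fintype.card F)) :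
    (2 : F) ≠ 0 :=
  Ring.two_ne_zero fun hF => by
    have := FiniteField.even_card_of_char_two hF
    rw [Nat.odd_iff] at h
    omega

theorem stmt7_general (p n : ℕ)
    (F : Type) [Field F] [Fintype F]
    -- `A` is the `p`-Sylow subgroup: cyclic of order `pⁿ`; the full group is
    -- `G = C × A` with `C = {1, t}` of order `2`, realized as `Multiplicative (ZMod 2) × A`
    (A : Type) [CommGroup A]
    (hcop : Nat.Coprime (Fintype.card F) (2 * p ^ n))
    -- `E 0, ..., E n` are the primitive idempotents of `F A`
    (E : ℕ → MonoidAlgebra F A)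
    (hEprim : ∀ i ≤ n, IsPrimIdem (E i))
    (hEsum : ∑ i ∈ Finset.range (n + 1), E i = 1) :
    ∀ x : MonoidAlgebra F (Multiplicative (ZMod 2) × A),
      IsPrimIdem x ↔
        ∃ i ≤ n,
          x = (2 : F)⁻¹ •
              ((1 + MonoidAlgebra.single ((Multiplicative.ofAdd (1 : ZMod 2), 1) :
                  Multiplicative (ZMod 2) × A) (1 : F)) *
                MonoidAlgebra.mapDomainRingHom F (MonoidHom.inr (Multiplicative (ZMod 2)) A) (E i)) ∨
          x = (2 : F)⁻¹ •
              ((1 - MonoidAlgebra.single ((Multiplicative.ofAdd (1 : ZMod 2), 1) :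
                  Multiplicative (ZMod 2) × A) (1 : F)) *
                MonoidAlgebra.mapDomainRingHom F (MonoidHom.inr (Multiplicative (ZMod 2)) A) (E i)) := by
  intro x
  have h2 : (2 : F) ≠ 0 :=
    two_ne_zero_of_odd_card (Nat.coprime_two_right.mp (hcop.coprime_dvd_right (dvd_mul_right 2 _)))
  rw [isPrimIdem_iff_exists_signIdem_mul_inr h2 (Finset.range (n + 1)) E
    (fun i hi => hEprim i (Nat.lt_succ_iff.mp (Finset.mem_range.mp hi))) hEsum]
  simp only [Finset.mem_range, Nat.lt_succ_iff, Int.exists_units_iff, mapDomainAlgHom_apply,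
    mapDomainRingHom_apply, ← smul_mul_assoc, ← signIdem_one, ← signIdem_neg_one]

theorem stmt7 (p n : ℕ) (hp : p.Prime) (hodd : Odd p)
    (F : Type) [Field F] [Fintype F]
    -- `A` is the `p`-Sylow subgroup: cyclic of order `pⁿ`; the full group is
    -- `G = C × A` with `C = {1, t}` of order `2`, realized as `Multiplicative (ZMod 2) × A`
    (A : Type) [CommGroup A] [Fintype A] (hA : IsCyclic A)
    (hcardA : Fintype.card A = p ^ n)
    (hcop : Nat.Coprime (Fintype.card F) (2 * p ^ n))
    -- the order of `q = |F|` modulo `2pⁿ` is `φ(pⁿ)`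
    (hord : orderOf ((Fintype.card F : ZMod (2 * p ^ n))) = Nat.totient (p ^ n))
    -- `E 0, ..., E n` are the primitive idempotents of `F A`
    (E : ℕ → MonoidAlgebra F A)
    (hEprim : ∀ i ≤ n, IsPrimIdem (E i))
    (hEorth : ∀ i ≤ n, ∀ j ≤ n, i ≠ j → E i * E j = 0)
    (hEsum : ∑ i ∈ Finset.range (n + 1), E i = 1) :
    ∀ x : MonoidAlgebra F (Multiplicative (ZMod 2) × A),
      IsPrimIdem x ↔
        ∃ i ≤ n,
          x = (2 : F)⁻¹ •
              ((1 + MonoidAlgebra.single ((Multiplicative.ofAdd (1 : ZMod 2), 1) :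
                  Multiplicative (ZMod 2) × A) (1 : F)) *
                MonoidAlgebra.mapDomainRingHom F (MonoidHom.inr (Multiplicative (ZMod 2)) A) (E i)) ∨
          x = (2 : F)⁻¹ •
              ((1 - MonoidAlgebra.single ((Multiplicative.ofAdd (1 : ZMod 2), 1) :
                  Multiplicative (ZMod 2) × A) (1 : F)) *
                MonoidAlgebra.mapDomainRingHom F (MonoidHom.inr (Multiplicative (ZMod 2)) A) (E i)) :=
  stmt7_general p n F A hcop E hEprim hEsum
end

section
/- Let G be a finite abelian group and F_q a finite field with char(F_q) ∤ |G|. If the group algebra F_q G contains an essential idempotent, then G is cyclic. -/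
/-!
If `G` is not cyclic it contains, for some prime `p`, a subgroup `K` of order `p ^ 2` and
exponent `p`: take `g` of maximal order; an element of prime order `p` in `G ⧸ ⟨g⟩` lifts, after
correction by a power of `g`, to an element of order `p` outside `⟨g⟩`. The `p + 1` subgroups of
order `p` of `K` partition `K \ {1}`, so `∑ L, (L̃ - 1) = K̃ - 1` in `F[G]`, where `H̃` is the sum
of the elements of `H`. An essential `e` kills every `H̃`, so this identity becomes
`(p + 1) • (-e) = -e`, i.e. `p • e = 0`; as `p` divides `|G|` it is invertible in `F`, so `e = 0`.
-/

open scoped Classical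

open Finset Subgroup

section NotCyclic

variable {G : Type*} [CommGroup G] [Finite G]

theorem exists_prime_dvd_orderOf_pow_eq_one_notMem_zpowers {g : G}
    (hg : orderOf g = Monoid.exponent G) (hne : zpowers g ≠ ⊤) :
    ∃ p, p.Prime ∧ p ∣ orderOf g ∧ ∃ y : G, y ^ p = 1 ∧ y ∉ zpowers g := by
  have : Nontrivial (G ⧸ zpowers g) := QuotientGroup.nontrivial_iff.mpr hne
  set p := (Nat.card (G ⧸ zpowers g)).minFac
  have hp : p.Prime := Nat.minFac_prime Finite.one_lt_card.ne'
  have : Fact p.Prime := ⟨hp⟩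
  obtain ⟨x', hx'⟩ := exists_prime_orderOf_dvd_card' (G := G ⧸ zpowers g) p (Nat.minFac_dvd _)
  obtain ⟨x, rfl⟩ := QuotientGroup.mk_surjective x'
  have hxg : x ∉ zpowers g := fun h => by
    rw [(QuotientGroup.eq_one_iff x).mpr h, orderOf_one] at hx'
    exact hp.ne_one hx'.symm
  have hpg : p ∣ orderOf g := hg ▸ hx' ▸
    (orderOf_map_dvd (QuotientGroup.mk' (zpowers g)) x).trans (Monoid.order_dvd_exponent x)
  obtain ⟨k, hk : g ^ k = x ^ p⟩ : x ^ p ∈ Submonoid.powers g := by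
    rw [mem_powers_iff_mem_zpowers, ← QuotientGroup.eq_one_iff, QuotientGroup.mk_pow, ← hx']
    exact pow_orderOf_eq_one _
  -- `(g ^ k) ^ (orderOf g / p) = x ^ orderOf g = 1`, so `orderOf g ∣ k * (orderOf g / p)`
  have hpk : p ∣ k := by
    have hq : 0 < orderOf g / p := Nat.div_pos (Nat.le_of_dvd (orderOf_pos g) hpg) hp.pos
    refine Nat.dvd_of_mul_dvd_mul_right hq ?_
    rw [Nat.mul_div_cancel' hpg, orderOf_dvd_iff_pow_eq_one, pow_mul, hk, ← pow_mul,
      Nat.mul_div_cancel' hpg, hg, Monoid.pow_exponent_eq_one]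
  obtain ⟨j, rfl⟩ := hpk
  refine ⟨p, hp, hpg, x * (g ^ j)⁻¹, ?_, fun h => hxg ?_⟩
  · rw [mul_pow, inv_pow, ← pow_mul, mul_comm j, hk, mul_inv_cancel]
  · simpa using mul_mem h (pow_mem (mem_zpowers g) j)

theorem exists_prime_lt_card_ker_powMonoidHom_of_not_isCyclic (hG : ¬IsCyclic G) :
    ∃ p, p.Prime ∧ p < Nat.card (powMonoidHom p : G →* G).ker := by
  obtain ⟨g, hg⟩ := Monoid.exists_orderOf_eq_exponent (G := G) .of_finite
  have hne : zpowers g ≠ ⊤ := fun h => hG (isCyclic_iff_exists_zpowers_eq_top.mpr ⟨g, h⟩)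
  obtain ⟨p, hp, hpg, y, hy, hyg⟩ := exists_prime_dvd_orderOf_pow_eq_one_notMem_zpowers hg hne
  set g' := g ^ (orderOf g / p)
  have hg' : orderOf g' = p := orderOf_pow_orderOf_div (orderOf_pos g).ne' hpg
  have hlt : zpowers g' < (powMonoidHom p : G →* G).ker := by
    refine SetLike.lt_iff_le_and_exists.mpr ⟨zpowers_le.mpr ?_, y, hy, ?_⟩
    · rw [MonoidHom.mem_ker, powMonoidHom_apply, ← hg', pow_orderOf_eq_one]
    · exact fun h => hyg (zpowers_le.mpr (pow_mem (mem_zpowers g) _) h)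
  refine ⟨p, hp, ?_⟩
  calc p = Nat.card (zpowers g') := by rw [Nat.card_zpowers, hg']
    _ < _ := (card_le_of_le hlt.le).lt_of_ne fun h => hlt.ne (eq_of_le_of_card_ge hlt.le h.ge)

theorem exists_card_eq_sq_le_ker_powMonoidHom {p : ℕ} (hp : p.Prime)
    (hlt : p < Nat.card (powMonoidHom p : G →* G).ker) :
    ∃ K : Subgroup G, Nat.card K = p ^ 2 ∧ K ≤ (powMonoidHom p : G →* G).ker := by
  set Ω := (powMonoidHom p : G →* G).ker
  have : Fact p.Prime := ⟨hp⟩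
  have hΩ : IsPGroup p Ω := fun x => ⟨1, Subtype.ext (by simpa using MonoidHom.mem_ker.mp x.2)⟩
  obtain ⟨n, hn⟩ := hΩ.exists_card_eq
  have hsq : p ^ 2 ≤ Nat.card Ω := by
    rw [hn] at hlt ⊢
    exact Nat.pow_le_pow_right hp.pos
      ((Nat.pow_lt_pow_iff_right hp.one_lt).mp (by simpa using hlt))
  obtain ⟨H, hH⟩ := Sylow.exists_subgroup_card_pow_prime_of_le_card hp hΩ hsq
  exact ⟨H.map Ω.subtype, by rw [card_map_of_injective Ω.subtype_injective, hH],
    map_subtype_le H⟩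

theorem exists_card_eq_sq_forall_pow_eq_one_of_not_isCyclic (hG : ¬IsCyclic G) :
    ∃ p, p.Prime ∧ ∃ K : Subgroup G, Nat.card K = p ^ 2 ∧ ∀ k ∈ K, k ^ p = 1 := by
  obtain ⟨p, hp, hlt⟩ := exists_prime_lt_card_ker_powMonoidHom_of_not_isCyclic hG
  obtain ⟨K, hK, hKle⟩ := exists_card_eq_sq_le_ker_powMonoidHom hp hlt
  exact ⟨p, hp, K, hK, fun k hk => hKle hk⟩

end NotCyclic

section GroupAlgebra

variable {G : Type*} [Group G] [Fintype G]

noncomputable def subgroupSum (R : Type*) [Semiring R] (H : Subgroup G) : MonoidAlgebra R G :=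
  ∑ h ∈ (H : Set G).toFinset, MonoidAlgebra.single h 1

theorem coeff_subgroupSum (R : Type*) [Semiring R] (H : Subgroup G) (x : G) :
    (subgroupSum R H).coeff x = if x ∈ H then 1 else 0 := by
  simp [subgroupSum, MonoidAlgebra.coeff_sum, Finsupp.single_apply]

theorem sum_subgroupSum_sub_one {R : Type*} [Ring R] (S : Finset (Subgroup G))
    (K : Subgroup G) (hle : ∀ L ∈ S, L ≤ K) (hpart : ∀ x ∈ K, x ≠ 1 → ∃! L, L ∈ S ∧ x ∈ L) :
    ∑ L ∈ S, (subgroupSum R L - 1) = subgroupSum R K - 1 := by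
  refine MonoidAlgebra.coeff_injective (Finsupp.ext fun x => ?_)
  simp only [MonoidAlgebra.coeff_sum, MonoidAlgebra.coeff_sub, Finsupp.coe_finsetSum,
    Finset.sum_apply, Finsupp.sub_apply, coeff_subgroupSum, MonoidAlgebra.one_def,
    MonoidAlgebra.coeff_single, Finsupp.single_apply]
  by_cases hx1 : x = 1
  · simp [hx1]
  simp only [Ne.symm hx1, if_false, sub_zero]
  by_cases hxK : x ∈ K
  · obtain ⟨L, ⟨hLS, hxL⟩, huniq⟩ := hpart x hxK hx1
    rw [sum_eq_single_of_mem L hLS fun L' hL' hne =>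
      if_neg fun h => hne (huniq L' ⟨hL', h⟩)]
    simp [hxL, hxK]
  · rw [if_neg hxK]
    exact sum_eq_zero fun L hL => if_neg fun h => hxK (hle L hL h)

theorem card_toFinset_erase_one (H : Subgroup G) :
    #((H : Set G).toFinset.erase 1) = Nat.card H - 1 := by
  rw [card_erase_of_mem (by simp), Set.toFinset_card, ← Nat.card_eq_fintype_card,
    SetLike.coe_sort_coe]

theorem zpowers_eq_of_mem_zpowers {p : ℕ} [Fact p.Prime] {k x : G} (hk : k ^ p = 1)
    (hx : x ∈ zpowers k) (hx1 : x ≠ 1) : zpowers x = zpowers k := by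
  have hk1 : k ≠ 1 := by rintro rfl; simp_all
  have hxp : x ^ p = 1 := by
    obtain ⟨i, rfl⟩ := hx
    rw [← zpow_natCast, ← zpow_mul, mul_comm, zpow_mul, zpow_natCast, hk, one_zpow]
  refine eq_of_le_of_card_ge (zpowers_le.mpr hx) ?_
  rw [Nat.card_zpowers, Nat.card_zpowers, orderOf_eq_prime hk hk1, orderOf_eq_prime hxp hx1]

noncomputable def nontrivialCyclicSubgroups (K : Subgroup G) : Finset (Subgroup G) :=
  ((K : Set G).toFinset.erase 1).image zpowers

theorem mem_nontrivialCyclicSubgroups {K L : Subgroup G} :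
    L ∈ nontrivialCyclicSubgroups K ↔ ∃ k ∈ K, k ≠ 1 ∧ zpowers k = L := by
  simp [nontrivialCyclicSubgroups, and_assoc, and_left_comm]

theorem le_of_mem_nontrivialCyclicSubgroups {K L : Subgroup G}
    (hL : L ∈ nontrivialCyclicSubgroups K) : L ≤ K := by
  obtain ⟨k, hkK, -, rfl⟩ := mem_nontrivialCyclicSubgroups.mp hL
  exact zpowers_le.mpr hkK

theorem ne_bot_of_mem_nontrivialCyclicSubgroups {K L : Subgroup G}
    (hL : L ∈ nontrivialCyclicSubgroups K) : L ≠ ⊥ := by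
  obtain ⟨k, -, hk1, rfl⟩ := mem_nontrivialCyclicSubgroups.mp hL
  exact zpowers_ne_bot.mpr hk1

variable {p : ℕ} [Fact p.Prime] {K : Subgroup G}

theorem existsUnique_mem_nontrivialCyclicSubgroups (hexp : ∀ k ∈ K, k ^ p = 1) {x : G}
    (hxK : x ∈ K) (hx1 : x ≠ 1) : ∃! L, L ∈ nontrivialCyclicSubgroups K ∧ x ∈ L := by
  refine ⟨zpowers x, ⟨mem_nontrivialCyclicSubgroups.mpr ⟨x, hxK, hx1, rfl⟩, mem_zpowers x⟩, ?_⟩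
  rintro L ⟨hL, hxL⟩
  obtain ⟨k, hkK, -, rfl⟩ := mem_nontrivialCyclicSubgroups.mp hL
  exact (zpowers_eq_of_mem_zpowers (hexp k hkK) hxL hx1).symm

theorem card_nontrivialCyclicSubgroups (hexp : ∀ k ∈ K, k ^ p = 1)
    (hcard : Nat.card K = p ^ 2) : #(nontrivialCyclicSubgroups K) = p + 1 := by
  have hp := (Fact.out : p.Prime)
  have hfiber : ∀ L ∈ nontrivialCyclicSubgroups K,
      #{k ∈ (K : Set G).toFinset.erase 1 | zpowers k = L} = p - 1 := by
    intro L hL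
    obtain ⟨x, hxK, hx1, rfl⟩ := mem_nontrivialCyclicSubgroups.mp hL
    have hline : {k ∈ (K : Set G).toFinset.erase 1 | zpowers k = zpowers x} =
        (zpowers x : Set G).toFinset.erase 1 := by
      ext k
      simp only [mem_filter, mem_erase, Set.mem_toFinset, SetLike.mem_coe]
      constructor
      · rintro ⟨⟨hk1, -⟩, h⟩
        exact ⟨hk1, h ▸ mem_zpowers k⟩
      · rintro ⟨hk1, hkx⟩
        exact ⟨⟨hk1, zpowers_le.mpr hxK hkx⟩, zpowers_eq_of_mem_zpowers (hexp x hxK) hkx hk1⟩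
    rw [hline, card_toFinset_erase_one, Nat.card_zpowers, orderOf_eq_prime (hexp x hxK) hx1]
  have hcount : (p + 1) * (p - 1) = #(nontrivialCyclicSubgroups K) * (p - 1) := by
    rw [← Nat.sq_sub_sq, one_pow, ← hcard, ← card_toFinset_erase_one,
      card_eq_sum_card_image zpowers]
    exact (sum_congr rfl hfiber).trans (by rw [sum_const, smul_eq_mul])
  exact (Nat.eq_of_mul_eq_mul_right (Nat.sub_pos_of_lt hp.one_lt) hcount).symm

theorem eq_zero_of_mul_subgroupSum_eq_zero {F : Type*} [Field F] (hexp : ∀ k ∈ K, k ^ p = 1)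
    (hcard : Nat.card K = p ^ 2) (hpF : (p : F) ≠ 0) {e : MonoidAlgebra F G}
    (he : ∀ H ≤ K, H ≠ ⊥ → e * subgroupSum F H = 0) : e = 0 := by
  have hreduced : ∀ H ≤ K, H ≠ ⊥ → e * (subgroupSum F H - 1) = -e := fun H hHK hH => by
    rw [mul_sub, he H hHK hH, mul_one, zero_sub]
  have hK : K ≠ ⊥ := fun h => by
    rw [h, card_bot] at hcard
    exact (Nat.one_lt_pow two_ne_zero (Fact.out : p.Prime).one_lt).ne hcard
  have key := congrArg (e * ·) (sum_subgroupSum_sub_one (R := F) _ K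
    (fun _ => le_of_mem_nontrivialCyclicSubgroups)
    (fun _ => existsUnique_mem_nontrivialCyclicSubgroups hexp))
  simp only [mul_sum] at key
  rw [sum_congr rfl fun L hL => hreduced L (le_of_mem_nontrivialCyclicSubgroups hL)
      (ne_bot_of_mem_nontrivialCyclicSubgroups hL), sum_const,
    card_nontrivialCyclicSubgroups hexp hcard, hreduced K le_rfl hK, succ_nsmul,
    add_eq_right, smul_neg, neg_eq_zero, ← Nat.cast_smul_eq_nsmul F] at key
  exact (smul_eq_zero.mp key).resolve_left hpF

end GroupAlgebra

theorem hat_eq_smul_subgroupSum (F : Type) [Field F] {G : Type} [Group G] [Fintype G]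
    (H : Subgroup G) : hat F H = (Nat.card H : F)⁻¹ • subgroupSum F H :=
  rfl

theorem stmt16_general (F : Type) [Field F] (G : Type) [CommGroup G] [Fintype G]
    (hchar : ¬ (ringChar F ∣ Fintype.card G))
    (e : MonoidAlgebra F G) (he : IsPrimIdem e)
    (hess : ∀ H : Subgroup G, H ≠ ⊥ → e * hat F H = 0) :
    IsCyclic G := by
  by_contra hG
  obtain ⟨p, hp, K, hcard, hexp⟩ := exists_card_eq_sq_forall_pow_eq_one_of_not_isCyclic hG
  have : Fact p.Prime := ⟨hp⟩
  have hcast : ∀ n : ℕ, n ∣ Nat.card G → (n : F) ≠ 0 := fun n hn h =>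
    hchar ((ringChar.dvd h).trans (Nat.card_eq_fintype_card (α := G) ▸ hn))
  have hpF : (p : F) ≠ 0 :=
    hcast p ((Dvd.intro_left _ (sq p).symm).trans (hcard ▸ K.card_subgroup_dvd_card))
  refine he.1 (eq_zero_of_mul_subgroupSum_eq_zero hexp hcard hpF fun H _ hH => ?_)
  have h := hess H hH
  rwa [hat_eq_smul_subgroupSum, mul_smul_comm,
    smul_eq_zero_iff_right (inv_ne_zero (hcast _ H.card_subgroup_dvd_card))] at h

theorem stmt16 (F : Type) [Field F] [Fintype F] (G : Type) [CommGroup G] [Fintype G]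
    (hchar : ¬ (ringChar F ∣ Fintype.card G))
    (e : MonoidAlgebra F G) (he : IsPrimIdem e)
    (hess : ∀ H : Subgroup G, H ≠ ⊥ → e * hat F H = 0) :
    IsCyclic G :=
  stmt16_general F G hchar e he hess
end
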